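/- arXiv:1401.5002 — 2 statements merged into one kernel-verified Lean document; each statement's English description precedes it below -/
import Mathlib

section
/- Let φ denote the standard normal density and Φ the standard normal CDF. Then ∫∫_{0 < x₂ < x₃} {φ(x₂)φ(x₃ − x₂) − φ(x₃)φ(0)} dx₂ dx₃ = Φ(0)² − φ(0)·∫_{−∞}^{0} Φ(x) dx. -/
open MeasureTheory

/-- The standard normal density. -/
noncomputable def stdPdf (x : ℝ) : ℝ := (Real.sqrt (2 * Real.pi))⁻¹ * Real.exp (-x ^ 2 / 2)

/-- The standard normal CDF. -/
noncomputable def stdCdf (x : ℝ) : ℝ := ∫ t in Set.Iic x, stdPdf t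

/-!
The shear `(x, y) ↦ (x, y - x)` maps the chamber `0 < x < y` onto the quadrant `(0, ∞)²`,
so the first term factors as `(∫₀^∞ φ)² = Φ(0)²`. For the second term, Fubini and
`∫ₓ^∞ φ = Φ(-x)` give `∫_{0<x<y} φ(y) = ∫₀^∞ Φ(-x) dx = ∫_{-∞}^0 Φ`. It is integrable because
`x² + (y - x)² ≤ y²` on the chamber, i.e. `φ(y) φ(0) ≤ φ(x) φ(y - x)` there.
-/

open Set

theorem setIntegral_setOf_mem_and_mem {α β E : Type*} [MeasurableSpace α] [MeasurableSpace β]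
    [NormedAddCommGroup E] [NormedSpace ℝ E] {μ : Measure α} {ν : Measure β} [SFinite μ]
    [SFinite ν] {s : Set α} {t : α → Set β} (hs : MeasurableSet s)
    (hst : MeasurableSet {p : α × β | p.1 ∈ s ∧ p.2 ∈ t p.1}) {g : α × β → E}
    (hg : IntegrableOn g {p : α × β | p.1 ∈ s ∧ p.2 ∈ t p.1} (μ.prod ν)) :
    ∫ p in {p : α × β | p.1 ∈ s ∧ p.2 ∈ t p.1}, g p ∂μ.prod ν =
      ∫ x in s, ∫ y in t x, g (x, y) ∂ν ∂μ := by
  rw [← integral_indicator hst, integral_prod _ (hg.integrable_indicator hst),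
    ← integral_indicator hs]
  congr 1 with x
  by_cases hx : x ∈ s
  · have ht : MeasurableSet (t x) := by
      simpa [hx] using hst.preimage (measurable_prodMk_left (x := x))
    rw [indicator_of_mem hx, ← integral_indicator ht]
    congr 1 with y
    by_cases hy : y ∈ t x <;> simp [hx, hy]
  · simp [indicator, hx]

theorem MeasureTheory.Integrable.mul_prod_sub {L : Type*} [NormedRing L] {f g : ℝ → L}
    (hf : Integrable f) (hg : Integrable g) : Integrable fun p : ℝ × ℝ => f p.1 * g (p.2 - p.1) :=
  (measurePreserving_prod_sub volume volume).integrable_comp_of_integrable (hf.mul_prod hg)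

def positiveChamber : Set (ℝ × ℝ) := {p | 0 < p.1 ∧ p.1 < p.2}

lemma measurableSet_positiveChamber : MeasurableSet positiveChamber :=
  (measurableSet_lt measurable_const measurable_fst).inter
    (measurableSet_lt measurable_fst measurable_snd)

theorem setIntegral_positiveChamber_mul_sub {L : Type*} [RCLike L] (f g : ℝ → L) :
    ∫ p in positiveChamber, f p.1 * g (p.2 - p.1) = (∫ x in Ioi 0, f x) * ∫ u in Ioi 0, g u := by
  have hpre : (fun p : ℝ × ℝ => (p.1, p.1 + p.2)) ⁻¹' positiveChamber = Ioi 0 ×ˢ Ioi 0 := by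
    ext p; simp [positiveChamber]
  rw [Measure.volume_eq_prod,
    ← (measurePreserving_prod_add volume volume).setIntegral_preimage_emb
      (MeasurableEquiv.shearAddRight ℝ).measurableEmbedding, hpre, ← setIntegral_prod_mul]
  simp

theorem setIntegral_positiveChamber_eq {E : Type*} [NormedAddCommGroup E] [NormedSpace ℝ E]
    {g : ℝ × ℝ → E} (hg : IntegrableOn g positiveChamber) :
    ∫ p in positiveChamber, g p = ∫ x in Ioi 0, ∫ y in Ioi x, g (x, y) :=
  setIntegral_setOf_mem_and_mem measurableSet_Ioi measurableSet_positiveChamber hg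

lemma stdPdf_pos (x : ℝ) : 0 < stdPdf x := by
  unfold stdPdf; positivity

lemma stdPdf_neg (x : ℝ) : stdPdf (-x) = stdPdf x := by
  simp [stdPdf]

lemma continuous_stdPdf : Continuous stdPdf := by
  unfold stdPdf; fun_prop

lemma stdPdf_eq_gaussianPDFReal : stdPdf = ProbabilityTheory.gaussianPDFReal 0 1 := by
  ext x
  simp [stdPdf, ProbabilityTheory.gaussianPDFReal]

lemma integrable_stdPdf : Integrable stdPdf :=
  stdPdf_eq_gaussianPDFReal ▸ ProbabilityTheory.integrable_gaussianPDFReal 0 1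

lemma setIntegral_Ioi_stdPdf (x : ℝ) : ∫ y in Ioi x, stdPdf y = stdCdf (-x) := by
  simp_rw [stdCdf, ← integral_comp_neg_Ioi, stdPdf_neg]

lemma stdPdf_mul_stdPdf_zero_le {x y : ℝ} (hx : 0 ≤ x) (hxy : x ≤ y) :
    stdPdf y * stdPdf 0 ≤ stdPdf x * stdPdf (y - x) := by
  simp only [stdPdf, mul_mul_mul_comm _ (Real.exp _), ← Real.exp_add]
  gcongr _ * Real.exp ?_
  nlinarith

lemma integrableOn_stdPdf_snd_mul_stdPdf_zero :
    IntegrableOn (fun p : ℝ × ℝ => stdPdf p.2 * stdPdf 0) positiveChamber := by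
  refine (integrable_stdPdf.mul_prod_sub integrable_stdPdf).integrableOn.mono' ?_ ?_
  · exact ((continuous_stdPdf.comp continuous_snd).mul continuous_const).aestronglyMeasurable
  · refine ae_restrict_of_forall_mem measurableSet_positiveChamber fun p hp => ?_
    rw [Real.norm_of_nonneg (mul_pos (stdPdf_pos _) (stdPdf_pos _)).le]
    exact stdPdf_mul_stdPdf_zero_le hp.1.le hp.2.le

lemma setIntegral_positiveChamber_stdPdf_snd :
    ∫ p in positiveChamber, stdPdf p.2 * stdPdf 0 = stdPdf 0 * ∫ x in Iic 0, stdCdf x := by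
  rw [setIntegral_positiveChamber_eq integrableOn_stdPdf_snd_mul_stdPdf_zero]
  simp_rw [integral_mul_const, setIntegral_Ioi_stdPdf, integral_comp_neg_Ioi, neg_zero, mul_comm]

theorem stmt10 :
    ∫ p in {p : ℝ × ℝ | 0 < p.1 ∧ p.1 < p.2},
        (stdPdf p.1 * stdPdf (p.2 - p.1) - stdPdf p.2 * stdPdf 0) =
      stdCdf 0 ^ 2 - stdPdf 0 * ∫ x in Set.Iic (0 : ℝ), stdCdf x := by
  change ∫ p in positiveChamber, _ = _
  rw [integral_sub (integrable_stdPdf.mul_prod_sub integrable_stdPdf).integrableOn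
      integrableOn_stdPdf_snd_mul_stdPdf_zero, setIntegral_positiveChamber_mul_sub,
    setIntegral_positiveChamber_stdPdf_snd, setIntegral_Ioi_stdPdf, neg_zero, sq]
end

section
/- Let k = p and define, for a measurable bounded path v : [0,1−b] → ℝ^k, G(μ) = (2/b)·sup_λ ∫_0^{1−b} log(1 + ⟪λ, v(r) − μ⟫) dr + (c*/b)·⟪μ, Φ^{-1}μ⟫ with Φ positive definite and c* > 0. If μ lies outside the closed convex hull of the range of v, then G(μ) = +∞; consequently inf_{μ ∈ ℝ^k} G(μ) = inf over μ in the closed convex hull of {v(r) : r ∈ (0,1−b)}. -/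
/-!
Separate `μ` from the closed convex hull of the path: some `w` and `δ > 0` satisfy
`δ ≤ ⟪w, v r - μ⟫` for all `r`. Along the ray `l = a • w` every `1 + ⟪l, v r - μ⟫` is at least
`1 + a δ`, so the log-likelihood integral is at least `(1 - b) log (1 + a δ) → ∞`, while the
penalty term stays finite.
-/

open scoped RealInnerProductSpace Classical
open Real MeasureTheory Filter

theorem iInf_eq_iInf_mem_of_eq_top {α β : Type*} [CompleteLattice β] {f : α → β} {s : Set α}
    (hf : ∀ x ∉ s, f x = ⊤) : ⨅ x, f x = ⨅ x ∈ s, f x := by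
  refine le_antisymm (le_iInf₂ fun x _ => iInf_le f x) (le_iInf fun x => ?_)
  by_cases hx : x ∈ s
  · exact iInf₂_le x hx
  · simp [hf x hx]

theorem exists_le_inner_sub_of_notMem_closure_convexHull {E : Type*} [NormedAddCommGroup E]
    [InnerProductSpace ℝ E] [CompleteSpace E] {s : Set E} {μ : E}
    (hμ : μ ∉ closure (convexHull ℝ s)) : ∃ w : E, ∃ δ > 0, ∀ x ∈ s, δ ≤ ⟪w, x - μ⟫ := by
  obtain ⟨f, u, hfμ, hfs⟩ :=
    geometric_hahn_banach_point_closed (convex_convexHull ℝ s).closure isClosed_closure hμ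
  refine ⟨(InnerProductSpace.toDual ℝ E).symm f, u - f μ, sub_pos.2 hfμ, fun x hx => ?_⟩
  have hux : u < f x := hfs x (subset_closure (subset_convexHull ℝ s hx))
  rw [InnerProductSpace.toDual_symm_apply, map_sub]
  linarith

section LogIntegral

variable {α : Type*} [MeasurableSpace α] {ν : Measure α} {S : Set α} {f : α → ℝ} {δ D : ℝ}

theorem mul_log_one_add_mul_le_setIntegral (hνS : ν S ≠ ⊤)
    (hf : AEStronglyMeasurable f (ν.restrict S)) (hS : MeasurableSet S) (hδ : 0 ≤ δ)
    (hlow : ∀ x ∈ S, δ ≤ f x) (hup : ∀ x ∈ S, f x ≤ D) {a : ℝ} (ha : 0 ≤ a) :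
    ν.real S * log (1 + a * δ) ≤ ∫ x in S, log (1 + a * f x) ∂ν := by
  have hlog_le : ∀ x ∈ S, log (1 + a * δ) ≤ log (1 + a * f x) := fun x hx =>
    log_le_log (by positivity) (by gcongr; exact hlow x hx)
  have hint : IntegrableOn (fun x => log (1 + a * f x)) S ν := by
    have : IsFiniteMeasure (ν.restrict S) := isFiniteMeasure_restrict.2 hνS
    have hmeas : AEStronglyMeasurable (fun x => log (1 + a * f x)) (ν.restrict S) :=
      (measurable_log.comp_aemeasurable
        ((hf.aemeasurable.const_mul a).const_add 1)).aestronglyMeasurable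
    refine Integrable.mono' (integrable_const (log (1 + a * D))) hmeas
      (ae_restrict_of_forall_mem hS fun x hx => ?_)
    have hfx := hlow x hx
    rw [norm_of_nonneg ((log_nonneg (by nlinarith)).trans (hlog_le x hx))]
    exact log_le_log (by nlinarith) (by gcongr; exact hup x hx)
  calc ν.real S * log (1 + a * δ) = ∫ _ in S, log (1 + a * δ) ∂ν := by
        rw [setIntegral_const, smul_eq_mul]
    _ ≤ ∫ x in S, log (1 + a * f x) ∂ν :=
        setIntegral_mono_on (integrableOn_const hνS) hint hS hlog_le

theorem exists_lt_setIntegral_log_one_add_mul (hνS : ν S ≠ ⊤) (hνS_pos : 0 < ν.real S)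
    (hf : AEStronglyMeasurable f (ν.restrict S)) (hS : MeasurableSet S) (hδ : 0 < δ)
    (hlow : ∀ x ∈ S, δ ≤ f x) (hup : ∀ x ∈ S, f x ≤ D) (M : ℝ) :
    ∃ a, 0 ≤ a ∧ M < ∫ x in S, log (1 + a * f x) ∂ν := by
  have hlim : Tendsto (fun a => ν.real S * log (1 + a * δ)) atTop atTop :=
    (tendsto_log_atTop.comp (tendsto_atTop_add_const_left _ 1
      (tendsto_id.atTop_mul_const hδ))).const_mul_atTop hνS_pos
  obtain ⟨a, hMa, ha⟩ := ((hlim.eventually_gt_atTop M).and (eventually_ge_atTop 0)).exists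
  exact ⟨a, ha, hMa.trans_le
    (mul_log_one_add_mul_le_setIntegral hνS hf hS hδ.le hlow hup ha)⟩

end LogIntegral

theorem iSup_setIntegral_log_one_add_inner_eq_top {α E : Type*} [MeasurableSpace α]
    [NormedAddCommGroup E] [InnerProductSpace ℝ E] [CompleteSpace E] {ν : Measure α} {S : Set α}
    (hS : MeasurableSet S) (hνS : ν S ≠ ⊤) (hνS_pos : 0 < ν.real S) {v : α → E}
    (hv : AEStronglyMeasurable v (ν.restrict S)) {R : ℝ} (hR : ∀ r ∈ S, ‖v r‖ ≤ R) {μ : E}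
    (hμ : μ ∉ closure (convexHull ℝ (v '' S))) :
    (⨆ l : E, if ∀ r ∈ S, 0 < 1 + ⟪l, v r - μ⟫ then
        ((∫ r in S, log (1 + ⟪l, v r - μ⟫) ∂ν : ℝ) : EReal) else ⊥) = ⊤ := by
  obtain ⟨w, δ, hδ, hsep⟩ := exists_le_inner_sub_of_notMem_closure_convexHull hμ
  have hlow : ∀ r ∈ S, δ ≤ ⟪w, v r - μ⟫ := fun r hr => hsep _ ⟨r, hr, rfl⟩
  have hup : ∀ r ∈ S, ⟪w, v r - μ⟫ ≤ ‖w‖ * (R + ‖μ‖) := fun r hr =>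
    (real_inner_le_norm _ _).trans <| by
      gcongr
      exact (norm_sub_le _ _).trans (by linarith [hR r hr])
  have hw : AEStronglyMeasurable (fun r => ⟪w, v r - μ⟫) (ν.restrict S) :=
    (continuous_const.inner (continuous_id.sub continuous_const)).comp_aestronglyMeasurable hv
  refine iSup_eq_top.2 fun y hy => ?_
  obtain ⟨M, hyM, -⟩ := EReal.exists_between_coe_real hy
  obtain ⟨a, ha, hMa⟩ := exists_lt_setIntegral_log_one_add_mul hνS hνS_pos hw hS hδ hlow hup M
  have hpos : ∀ r ∈ S, 0 < 1 + ⟪a • w, v r - μ⟫ := fun r hr => by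
    rw [real_inner_smul_left]
    nlinarith [hlow r hr]
  refine ⟨a • w, ?_⟩
  rw [if_pos hpos]
  simp only [real_inner_smul_left]
  exact hyM.trans (EReal.coe_lt_coe_iff.2 hMa)

theorem stmt19_general {k : ℕ} (b cstar : ℝ) (hb : b ∈ Set.Ioo (0 : ℝ) 1)
    (v : ℝ → EuclideanSpace ℝ (Fin k)) (hmeas : Measurable v)
    (hbdd : ∃ R : ℝ, ∀ r ∈ Set.Icc (0 : ℝ) (1 - b), ‖v r‖ ≤ R)
    (Φinv : EuclideanSpace ℝ (Fin k) →ₗ[ℝ] EuclideanSpace ℝ (Fin k))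
    (G : EuclideanSpace ℝ (Fin k) → EReal)
    (hG : G = fun μ =>
      ((2 / b : ℝ) : EReal) * (⨆ l : EuclideanSpace ℝ (Fin k),
        if ∀ r ∈ Set.Ioc (0 : ℝ) (1 - b), 0 < 1 + ⟪l, v r - μ⟫ then
          ((∫ r in Set.Ioc (0 : ℝ) (1 - b), Real.log (1 + ⟪l, v r - μ⟫) : ℝ) : EReal)
        else ⊥) +
      ((cstar / b * ⟪μ, Φinv μ⟫ : ℝ) : EReal)) :
    (∀ μ, μ ∉ closure (convexHull ℝ (v '' Set.Ioc (0 : ℝ) (1 - b))) → G μ = ⊤) ∧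
    (⨅ μ, G μ = ⨅ μ ∈ closure (convexHull ℝ (v '' Set.Ioc (0 : ℝ) (1 - b))), G μ) := by
  obtain ⟨hb0, hb1⟩ := hb
  obtain ⟨R, hR⟩ := hbdd
  have hvol : 0 < volume.real (Set.Ioc (0 : ℝ) (1 - b)) := by
    rw [volume_real_Ioc_of_le (by linarith)]
    linarith
  have hG_top : ∀ μ, μ ∉ closure (convexHull ℝ (v '' Set.Ioc (0 : ℝ) (1 - b))) → G μ = ⊤ := by
    intro μ hμ
    simp only [hG]
    rw [iSup_setIntegral_log_one_add_inner_eq_top measurableSet_Ioc measure_Ioc_lt_top.ne hvol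
      hmeas.aestronglyMeasurable (fun r hr => hR r (Set.Ioc_subset_Icc_self hr)) hμ,
      EReal.coe_mul_top_of_pos (by positivity), EReal.top_add_coe]
  exact ⟨hG_top, iInf_eq_iInf_mem_of_eq_top hG_top⟩

theorem stmt19 {k : ℕ} (b cstar : ℝ) (hb : b ∈ Set.Ioo (0 : ℝ) 1) (hc : 0 < cstar)
    (v : ℝ → EuclideanSpace ℝ (Fin k)) (hmeas : Measurable v)
    (hbdd : ∃ R : ℝ, ∀ r ∈ Set.Icc (0 : ℝ) (1 - b), ‖v r‖ ≤ R)
    (Φinv : EuclideanSpace ℝ (Fin k) →ₗ[ℝ] EuclideanSpace ℝ (Fin k))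
    (hΦ : ∀ μ : EuclideanSpace ℝ (Fin k), μ ≠ 0 → 0 < ⟪μ, Φinv μ⟫)
    (G : EuclideanSpace ℝ (Fin k) → EReal)
    (hG : G = fun μ =>
      ((2 / b : ℝ) : EReal) * (⨆ l : EuclideanSpace ℝ (Fin k),
        if ∀ r ∈ Set.Ioc (0 : ℝ) (1 - b), 0 < 1 + ⟪l, v r - μ⟫ then
          ((∫ r in Set.Ioc (0 : ℝ) (1 - b), Real.log (1 + ⟪l, v r - μ⟫) : ℝ) : EReal)
        else ⊥) +
      ((cstar / b * ⟪μ, Φinv μ⟫ : ℝ) : EReal)) :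
    (∀ μ, μ ∉ closure (convexHull ℝ (v '' Set.Ioc (0 : ℝ) (1 - b))) → G μ = ⊤) ∧
    (⨅ μ, G μ = ⨅ μ ∈ closure (convexHull ℝ (v '' Set.Ioc (0 : ℝ) (1 - b))), G μ) :=
  stmt19_general b cstar hb v hmeas hbdd Φinv G hG
end
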